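/- The prederivative operator is bilinear in the vector and satisfies the norm bound ‖P_v(J)‖_{B^{r+1}} ≤ ‖v‖·‖J‖_{B^r} for all differential k-chains J ∈ B̂_k^r, vectors v ∈ ℝⁿ, and r ≥ 1. In particular, the sequence (T_{v/i} − I)(p; i·α) is Cauchy in the B² norm, so P_v(p;α) := lim_{i→∞} (T_{v/i} − I)(p; iα) is well-defined. -/

import Mathlib

noncomputable section

open Finsupp Filter

variable {E W : Type*} [NormedAddCommGroup E] [NormedSpace ℝ E]
  [NormedAddCommGroup W] [NormedSpace ℝ W]

/-- Translation of a Dirac chain through the vector `u`. -/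
def transl (u : E) (A : E →₀ W) : E →₀ W := Finsupp.mapDomain (· + u) A

/-- The difference operator `Δ_u = T_u - I`. -/
def del (u : E) (A : E →₀ W) : E →₀ W := transl u A - A

/-- Iterated difference chain along a list of vectors. -/
def diff : List E → (E →₀ W) → (E →₀ W)
  | [], A => A
  | u :: σ, A => del u (diff σ A)

/-- The product of the norms of the vectors in the list `σ`. -/
def lnorm (σ : List E) : ℝ := (σ.map norm).prod

/-- Costs of representations of `A` as sums of `j`-difference chains with `j ≤ r`. -/
def reps (r : ℕ) (A : E →₀ W) : Set ℝ :=
  {c | ∃ (m : ℕ) (σ : Fin m → List E) (p : Fin m → E) (α : Fin m → W),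
      (∀ i, (σ i).length ≤ r) ∧
      A = ∑ i, diff (σ i) (Finsupp.single (p i) (α i)) ∧
      c = ∑ i, lnorm (σ i) * ‖α i‖}

/-- The `B^r` norm of a Dirac chain. -/
def Bnorm (r : ℕ) (A : E →₀ W) : ℝ := sInf (reps r A)

/-- `M` is a `B^r`-bound for the cochain (differential form) `ω`. -/
def IsFormBound (r : ℕ) (ω : (E →₀ W) →ₗ[ℝ] ℝ) (M : ℝ) : Prop :=
  ∀ (σ : List E) (p : E) (α : W), σ.length ≤ r →
    |ω (diff σ (Finsupp.single p α))| ≤ M * lnorm σ * ‖α‖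

/-- The `B^r` norm of a differential form. -/
def formNorm (r : ℕ) (ω : (E →₀ W) →ₗ[ℝ] ℝ) : ℝ :=
  sInf {M | 0 ≤ M ∧ IsFormBound r ω M}

open Topology

/-!
Prepending a vector `u` to every difference chain of a representation of `A` multiplies its
cost by `‖u‖`, so `‖Δ_u A‖_{B^{r+1}} ≤ ‖u‖ ‖A‖_{B^r}`; hence the difference quotients
`t⁻¹ Δ_{tv} A` have `B^{r+1}` norm at most `‖v‖ ‖A‖_{B^r}`, and the bound passes to the limit and,
by density, to the completion. Additivity in `v` comes from `Δ_{a+b} = Δ_a + Δ_b + Δ_a Δ_b`: the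
second-order term divided by `t` has `B^{r+1}` norm `O(|t|) ‖A‖_{B^{r-1}}` (this is where `r ≥ 1`
enters), so it vanishes in the limit. Homogeneity is the change of variable `t ↦ t a`.

For the Cauchy estimate put `w = v / (m k)`. Then
`m Δ_{v/m} A - m k Δ_w A = m ∑_{l<k} Δ_w Δ_{l w} A` has `B^{r+2}` norm at most
`‖v‖² ‖A‖_{B^r} / m`, and comparing both `m` and `k` with `m k` gives the bound
`(1/m + 1/k) ‖v‖² ‖A‖_{B^r}`.
-/

section

open scoped Pointwise

variable {E W : Type*} [NormedAddCommGroup E] [NormedAddCommGroup W]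

theorem del_sum {ι : Type*} (u : E) (s : Finset ι) (A : ι → E →₀ W) :
    del u (∑ i ∈ s, A i) = ∑ i ∈ s, del u (A i) :=
  map_sum (Finsupp.mapDomain.addMonoidHom (· + u) - AddMonoidHom.id (E →₀ W)) A s

theorem transl_sub (u : E) (A B : E →₀ W) : transl u (A - B) = transl u A - transl u B :=
  Finsupp.mapDomain_sub

theorem del_smul [NormedSpace ℝ W] (u : E) (c : ℝ) (A : E →₀ W) :
    del u (c • A) = c • del u A := by
  rw [del, del, transl, transl, Finsupp.mapDomain_smul, smul_sub]

theorem del_zero_left (A : E →₀ W) : del (0 : E) A = 0 := by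
  simp only [del, transl, add_zero]
  exact sub_eq_zero.2 Finsupp.mapDomain_id

theorem transl_add (a b : E) (A : E →₀ W) : transl (a + b) A = transl a (transl b A) := by
  rw [transl, transl, transl, ← Finsupp.mapDomain_comp]
  congr 1
  funext x
  simp [add_comm a b, add_assoc]

theorem del_add_left (a b : E) (A : E →₀ W) :
    del (a + b) A = del a A + del b A + del a (del b A) := by
  simp only [del, transl_add, transl_sub]
  abel

theorem del_natCast_smul_sub [NormedSpace ℝ E] [NormedSpace ℝ W] (w : E) (k : ℕ)
    (A : E →₀ W) :
    del ((k : ℝ) • w) A - (k : ℝ) • del w A =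
      ∑ l ∈ Finset.range k, del w (del ((l : ℝ) • w) A) := by
  induction k with
  | zero => simp [del_zero_left]
  | succ k ih =>
    rw [Finset.sum_range_succ, ← ih, Nat.cast_succ, add_smul, one_smul, add_comm _ w,
      del_add_left, add_smul, one_smul]
    abel

theorem diff_smul [NormedSpace ℝ W] (σ : List E) (c : ℝ) (A : E →₀ W) :
    diff σ (c • A) = c • diff σ A := by
  induction σ with
  | nil => rfl
  | cons u σ ih => simp only [diff, ih, del_smul]

theorem lnorm_nonneg (σ : List E) : 0 ≤ lnorm σ :=
  List.prod_nonneg fun _ hx => by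
    obtain ⟨u, -, rfl⟩ := List.mem_map.1 hx
    exact norm_nonneg u

theorem lnorm_cons (u : E) (σ : List E) : lnorm (u :: σ) = ‖u‖ * lnorm σ := by
  simp [lnorm]

section Representations

variable {r : ℕ} {A B : E →₀ W} {a b : ℝ}

theorem reps_nonneg (ha : a ∈ reps r A) : 0 ≤ a := by
  obtain ⟨m, σ, p, α, -, -, rfl⟩ := ha
  exact Finset.sum_nonneg fun i _ => mul_nonneg (lnorm_nonneg _) (norm_nonneg _)

theorem zero_mem_reps (r : ℕ) : (0 : ℝ) ∈ reps r (0 : E →₀ W) :=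
  ⟨0, ![], ![], ![], by simp, by simp, by simp⟩

theorem diff_mem_reps {σ : List E} (h : σ.length ≤ r) (p : E) (α : W) :
    lnorm σ * ‖α‖ ∈ reps r (diff σ (Finsupp.single p α)) :=
  ⟨1, ![σ], ![p], ![α], by simpa using h, by simp, by simp⟩

theorem add_mem_reps (ha : a ∈ reps r A) (hb : b ∈ reps r B) : a + b ∈ reps r (A + B) := by
  obtain ⟨m₁, σ₁, p₁, α₁, h₁, rfl, rfl⟩ := ha
  obtain ⟨m₂, σ₂, p₂, α₂, h₂, rfl, rfl⟩ := hb
  refine ⟨m₁ + m₂, Fin.append σ₁ σ₂, Fin.append p₁ p₂, Fin.append α₁ α₂,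
    Fin.addCases (by simpa using h₁) (by simpa using h₂), ?_, ?_⟩ <;>
  simp [Fin.sum_univ_add]

theorem smul_mem_reps [NormedSpace ℝ W] (c : ℝ) (ha : a ∈ reps r A) :
    |c| * a ∈ reps r (c • A) := by
  obtain ⟨m, σ, p, α, hσ, rfl, rfl⟩ := ha
  refine ⟨m, σ, p, fun i => c • α i, hσ, ?_, ?_⟩
  · simp [Finset.smul_sum, ← diff_smul, Finsupp.smul_single]
  · simp [Finset.mul_sum, norm_smul, mul_left_comm]

theorem del_mem_reps (u : E) (ha : a ∈ reps r A) : ‖u‖ * a ∈ reps (r + 1) (del u A) := by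
  obtain ⟨m, σ, p, α, hσ, rfl, rfl⟩ := ha
  refine ⟨m, fun i => u :: σ i, p, α, fun i => by simpa using hσ i, del_sum _ _ _, ?_⟩
  simp [Finset.mul_sum, lnorm_cons, mul_assoc]

theorem reps_nonempty (r : ℕ) (A : E →₀ W) : (reps r A).Nonempty := by
  induction A using Finsupp.induction with
  | zero => exact ⟨0, zero_mem_reps r⟩
  | single_add p α A _ _ ih =>
    obtain ⟨c, hc⟩ := ih
    exact ⟨_, add_mem_reps (diff_mem_reps (σ := []) (Nat.zero_le r) p α) hc⟩

end Representations

section Bnorm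

variable (r : ℕ)

theorem Bnorm_le_of_mem {A : E →₀ W} {a : ℝ} (ha : a ∈ reps r A) : Bnorm r A ≤ a :=
  csInf_le ⟨0, fun _ => reps_nonneg⟩ ha

theorem Bnorm_nonneg (A : E →₀ W) : 0 ≤ Bnorm r A :=
  le_csInf (reps_nonempty r A) fun _ => reps_nonneg

theorem Bnorm_le_mul_of_forall_mem_reps {s : ℕ} {A B : E →₀ W} {K : ℝ} (hK : 0 ≤ K)
    (h : ∀ a ∈ reps r A, K * a ∈ reps s B) : Bnorm s B ≤ K * Bnorm r A :=
  calc Bnorm s B ≤ sInf (K • reps r A) :=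
        le_csInf (reps_nonempty r A).smul_set fun _ ⟨a, ha, hKa⟩ =>
          hKa ▸ Bnorm_le_of_mem s (h a ha)
    _ = K * Bnorm r A := Real.sInf_smul_of_nonneg hK _

theorem Bnorm_add_le (A B : E →₀ W) : Bnorm r (A + B) ≤ Bnorm r A + Bnorm r B := by
  have h : ∀ a ∈ reps r A, Bnorm r (A + B) - a ≤ Bnorm r B := fun a ha =>
    le_csInf (reps_nonempty r B) fun b hb =>
      sub_le_iff_le_add'.2 (Bnorm_le_of_mem r (add_mem_reps ha hb))
  exact sub_le_iff_le_add.1 (le_csInf (reps_nonempty r A) fun a ha => sub_le_comm.1 (h a ha))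

theorem Bnorm_smul_le [NormedSpace ℝ W] (c : ℝ) (A : E →₀ W) : Bnorm r (c • A) ≤ |c| * Bnorm r A :=
  Bnorm_le_mul_of_forall_mem_reps r (abs_nonneg c) fun _ => smul_mem_reps c

theorem Bnorm_del_le (u : E) (A : E →₀ W) : Bnorm (r + 1) (del u A) ≤ ‖u‖ * Bnorm r A :=
  Bnorm_le_mul_of_forall_mem_reps r (norm_nonneg u) fun _ => del_mem_reps u

theorem Bnorm_sub_le [NormedSpace ℝ W] (A B : E →₀ W) :
    Bnorm r (A - B) ≤ Bnorm r A + Bnorm r B :=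
  calc Bnorm r (A - B) = Bnorm r (A + (-1 : ℝ) • B) := by rw [neg_one_smul, sub_eq_add_neg]
    _ ≤ Bnorm r A + |(-1 : ℝ)| * Bnorm r B :=
        (Bnorm_add_le r A _).trans (add_le_add le_rfl (Bnorm_smul_le r (-1) B))
    _ = Bnorm r A + Bnorm r B := by rw [abs_neg, abs_one, one_mul]

theorem Bnorm_sum_le {ι : Type*} (s : Finset ι) (A : ι → E →₀ W) :
    Bnorm r (∑ i ∈ s, A i) ≤ ∑ i ∈ s, Bnorm r (A i) :=
  Finset.le_sum_of_subadditive (Bnorm (W := W) r) (Bnorm_le_of_mem r (zero_mem_reps r))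
    (Bnorm_add_le r) s A

end Bnorm

section DifferenceQuotient

variable [NormedSpace ℝ E] [NormedSpace ℝ W]

def diffQuot (v : E) (A : E →₀ W) (t : ℝ) : E →₀ W := t⁻¹ • del (t • v) A

theorem diffQuot_add (v w : E) (A : E →₀ W) (t : ℝ) :
    diffQuot (v + w) A t = diffQuot v A t + diffQuot w A t + diffQuot v (del (t • w) A) t := by
  simp only [diffQuot, smul_add, del_add_left]

theorem diffQuot_smul {a : ℝ} (ha : a ≠ 0) (v : E) (A : E →₀ W) (t : ℝ) :
    diffQuot (a • v) A t = a • diffQuot v A (t * a) := by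
  rw [diffQuot, diffQuot, smul_smul, smul_smul, mul_inv_rev, mul_inv_cancel_left₀ ha]

theorem diffQuot_single (v p : E) (α : W) (t : ℝ) :
    diffQuot v (Finsupp.single p α) t = del (t • v) (Finsupp.single p (t⁻¹ • α)) := by
  rw [diffQuot, ← del_smul, Finsupp.smul_single]

theorem Bnorm_diffQuot_le (r : ℕ) (v : E) (A : E →₀ W) {t : ℝ} (ht : t ≠ 0) :
    Bnorm (r + 1) (diffQuot v A t) ≤ ‖v‖ * Bnorm r A :=
  calc Bnorm (r + 1) (diffQuot v A t) ≤ |t⁻¹| * Bnorm (r + 1) (del (t • v) A) :=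
        Bnorm_smul_le (r + 1) t⁻¹ _
    _ ≤ |t⁻¹| * (‖t • v‖ * Bnorm r A) := by gcongr; exact Bnorm_del_le r _ A
    _ = ‖v‖ * Bnorm r A := by
        rw [norm_smul, Real.norm_eq_abs, abs_inv]
        field_simp

theorem Bnorm_diffQuot_del_le (r : ℕ) (v w : E) (A : E →₀ W) {t : ℝ} (ht : t ≠ 0) :
    Bnorm (r + 2) (diffQuot v (del (t • w) A) t) ≤ |t| * (‖v‖ * ‖w‖ * Bnorm r A) :=
  calc Bnorm (r + 2) (diffQuot v (del (t • w) A) t) ≤ ‖v‖ * Bnorm (r + 1) (del (t • w) A) :=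
        Bnorm_diffQuot_le (r + 1) v _ ht
    _ ≤ ‖v‖ * (‖t • w‖ * Bnorm r A) := by gcongr; exact Bnorm_del_le r _ A
    _ = |t| * (‖v‖ * ‖w‖ * Bnorm r A) := by rw [norm_smul, Real.norm_eq_abs]; ring

variable {Y : Type*} [NormedAddCommGroup Y] [NormedSpace ℝ Y] {ι : (E →₀ W) →ₗ[ℝ] Y}

theorem norm_le_of_tendsto_diffQuot {r : ℕ} (hι : ∀ A, ‖ι A‖ = Bnorm (r + 1) A) {v : E}
    {A : E →₀ W} {y : Y} (h : Tendsto (fun t => ι (diffQuot v A t)) (𝓝[≠] 0) (𝓝 y)) :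
    ‖y‖ ≤ ‖v‖ * Bnorm r A := by
  refine le_of_tendsto h.norm ?_
  filter_upwards [self_mem_nhdsWithin] with t ht
  rw [hι]
  exact Bnorm_diffQuot_le r v A ht

theorem tendsto_diffQuot_add {r : ℕ} (hι : ∀ A, ‖ι A‖ = Bnorm (r + 2) A) {v w : E}
    {A : E →₀ W} {y z : Y} (hv : Tendsto (fun t => ι (diffQuot v A t)) (𝓝[≠] 0) (𝓝 y))
    (hw : Tendsto (fun t => ι (diffQuot w A t)) (𝓝[≠] 0) (𝓝 z)) :
    Tendsto (fun t => ι (diffQuot (v + w) A t)) (𝓝[≠] 0) (𝓝 (y + z)) := by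
  have hsecond : Tendsto (fun t => ι (diffQuot v (del (t • w) A) t)) (𝓝[≠] 0) (𝓝 0) := by
    have hlin : Tendsto (fun t : ℝ => |t| * (‖v‖ * ‖w‖ * Bnorm r A)) (𝓝[≠] 0) (𝓝 0) :=
      (Continuous.tendsto' (by fun_prop) 0 0 (by simp)).mono_left nhdsWithin_le_nhds
    refine squeeze_zero_norm' ?_ hlin
    filter_upwards [self_mem_nhdsWithin] with t ht
    rw [hι]
    exact Bnorm_diffQuot_del_le r v w A ht
  simpa only [diffQuot_add, map_add, add_zero] using (hv.add hw).add hsecond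

theorem tendsto_diffQuot_smul (a : ℝ) {v : E} {A : E →₀ W} {y : Y}
    (h : Tendsto (fun t => ι (diffQuot v A t)) (𝓝[≠] 0) (𝓝 y)) :
    Tendsto (fun t => ι (diffQuot (a • v) A t)) (𝓝[≠] 0) (𝓝 (a • y)) := by
  rcases eq_or_ne a 0 with rfl | ha
  · simp [diffQuot, del_zero_left]
  have hmul : Tendsto (· * a) (𝓝[≠] (0 : ℝ)) (𝓝[≠] 0) :=
    tendsto_nhdsWithin_of_tendsto_nhds_of_eventually_within _
      ((Continuous.tendsto' (continuous_mul_const a) 0 0 (zero_mul a)).mono_left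
        nhdsWithin_le_nhds)
      (eventually_nhdsWithin_of_forall fun t ht => mul_ne_zero ht ha)
  simpa only [diffQuot_smul ha, map_smul, Function.comp_def] using (h.comp hmul).const_smul a

end DifferenceQuotient

section Cauchy

variable [NormedSpace ℝ E] [NormedSpace ℝ W]

theorem Bnorm_del_natCast_smul_sub_le (r : ℕ) (w : E) (k : ℕ) (A : E →₀ W) :
    Bnorm (r + 2) (del ((k : ℝ) • w) A - (k : ℝ) • del w A) ≤ k ^ 2 * (‖w‖ ^ 2 * Bnorm r A) := by
  have hB : 0 ≤ ‖w‖ ^ 2 * Bnorm r A := mul_nonneg (sq_nonneg _) (Bnorm_nonneg r A)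
  rw [del_natCast_smul_sub]
  calc _ ≤ ∑ l ∈ Finset.range k, Bnorm (r + 2) (del w (del ((l : ℝ) • w) A)) :=
        Bnorm_sum_le _ _ _
    _ ≤ ∑ l ∈ Finset.range k, ‖w‖ * (‖(l : ℝ) • w‖ * Bnorm r A) := by
        gcongr with l
        exact (Bnorm_del_le _ _ _).trans (by gcongr; exact Bnorm_del_le r _ A)
    _ = ∑ l ∈ Finset.range k, (l : ℝ) * (‖w‖ ^ 2 * Bnorm r A) :=
        Finset.sum_congr rfl fun l _ => by rw [norm_smul, Real.norm_natCast]; ring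
    _ ≤ ∑ _l ∈ Finset.range k, (k : ℝ) * (‖w‖ ^ 2 * Bnorm r A) := by
        gcongr with l hl
        exact_mod_cast (Finset.mem_range.1 hl).le
    _ = k ^ 2 * (‖w‖ ^ 2 * Bnorm r A) := by
        rw [Finset.sum_const, Finset.card_range, nsmul_eq_mul]; ring

theorem Bnorm_diffQuot_inv_sub_inv_mul_le (r : ℕ) (v : E) (A : E →₀ W) {m : ℝ} (hm : 0 < m)
    {k : ℕ} (hk : 0 < k) :
    Bnorm (r + 2) (diffQuot v A m⁻¹ - diffQuot v A (m * k)⁻¹) ≤ ‖v‖ ^ 2 * Bnorm r A / m := by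
  set w : E := (m * k)⁻¹ • v
  have hk' : (k : ℝ) ≠ 0 := by positivity
  have hw : m⁻¹ • v = (k : ℝ) • w := by
    rw [smul_smul]
    congr 1
    field_simp
  have hsplit : diffQuot v A m⁻¹ - diffQuot v A (m * k)⁻¹
      = m • (del ((k : ℝ) • w) A - (k : ℝ) • del w A) := by
    rw [diffQuot, diffQuot, inv_inv, inv_inv, hw, mul_smul, ← smul_sub]
  calc _ = Bnorm (r + 2) (m • (del ((k : ℝ) • w) A - (k : ℝ) • del w A)) := by rw [hsplit]
    _ ≤ |m| * (k ^ 2 * (‖w‖ ^ 2 * Bnorm r A)) := by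
        refine (Bnorm_smul_le _ _ _).trans ?_
        gcongr
        exact Bnorm_del_natCast_smul_sub_le r w k A
    _ = ‖v‖ ^ 2 * Bnorm r A / m := by
        rw [abs_of_pos hm, norm_smul, Real.norm_eq_abs, abs_inv, abs_of_pos (by positivity)]
        field_simp

theorem Bnorm_diffQuot_inv_sub_le (r : ℕ) (v : E) (A : E →₀ W) {m k : ℕ} (hm : 0 < m)
    (hk : 0 < k) :
    Bnorm (r + 2) (diffQuot v A (m : ℝ)⁻¹ - diffQuot v A (k : ℝ)⁻¹)
      ≤ ‖v‖ ^ 2 * Bnorm r A * ((m : ℝ)⁻¹ + (k : ℝ)⁻¹) :=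
  calc _ = Bnorm (r + 2) ((diffQuot v A (m : ℝ)⁻¹ - diffQuot v A ((m : ℝ) * k)⁻¹)
        - (diffQuot v A (k : ℝ)⁻¹ - diffQuot v A ((k : ℝ) * m)⁻¹)) := by
        rw [mul_comm (k : ℝ), sub_sub_sub_cancel_right]
    _ ≤ ‖v‖ ^ 2 * Bnorm r A / m + ‖v‖ ^ 2 * Bnorm r A / k :=
        (Bnorm_sub_le _ _ _).trans (add_le_add
          (Bnorm_diffQuot_inv_sub_inv_mul_le r v A (Nat.cast_pos.2 hm) hk)
          (Bnorm_diffQuot_inv_sub_inv_mul_le r v A (Nat.cast_pos.2 hk) hm))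
    _ = ‖v‖ ^ 2 * Bnorm r A * ((m : ℝ)⁻¹ + (k : ℝ)⁻¹) := by ring

theorem exists_Bnorm_diffQuot_inv_succ_sub_lt (r : ℕ) (v : E) (A : E →₀ W) {ε : ℝ}
    (hε : 0 < ε) : ∃ N : ℕ, ∀ i ≥ N, ∀ j ≥ N,
      Bnorm (r + 2) (diffQuot v A ((i : ℝ) + 1)⁻¹ - diffQuot v A ((j : ℝ) + 1)⁻¹) < ε := by
  have hlim : Tendsto (fun i : ℕ => ‖v‖ ^ 2 * Bnorm r A * ((i : ℝ) + 1)⁻¹) atTop (𝓝 0) := by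
    simpa using (tendsto_one_div_add_atTop_nhds_zero_nat (𝕜 := ℝ)).const_mul (‖v‖ ^ 2 * Bnorm r A)
  obtain ⟨N, hN⟩ := eventually_atTop.1 (hlim.eventually (gt_mem_nhds (half_pos hε)))
  refine ⟨N, fun i hi j hj => ?_⟩
  have h := Bnorm_diffQuot_inv_sub_le r v A i.succ_pos j.succ_pos
  push_cast at h
  linarith [hN i hi, hN j hj]

end Cauchy

end

/-- The prederivative operator `P_v`, characterized on Dirac chains as
the limit of rescaled translation differences `t⁻¹·Δ_{t·v}` in the `B^{r+1}` completion,
is bilinear in `(v, J)` and satisfies `‖P_v(J)‖_{B^{r+1}} ≤ ‖v‖·‖J‖_{B^r}` for `r ≥ 1`.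
In particular the sequence `(T_{v/i} − I)(p; i·α)` is Cauchy in the `B²` norm, so
`P_v(p;α)` is well-defined. -/
theorem prederivative_bound_and_bilinear {n : ℕ} {W : Type*}
    [NormedAddCommGroup W] [NormedSpace ℝ W]
    (r : ℕ) (hr : 1 ≤ r)
    (X Y : Type*) [NormedAddCommGroup X] [NormedSpace ℝ X]
    [NormedAddCommGroup Y] [NormedSpace ℝ Y]
    (ιX : ((EuclideanSpace ℝ (Fin n)) →₀ W) →ₗ[ℝ] X)
    (hX : ∀ A, ‖ιX A‖ = Bnorm r A) (hXd : DenseRange ιX)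
    (ιY : ((EuclideanSpace ℝ (Fin n)) →₀ W) →ₗ[ℝ] Y)
    (hY : ∀ A, ‖ιY A‖ = Bnorm (r + 1) A)
    (P : EuclideanSpace ℝ (Fin n) → X →L[ℝ] Y)
    (hP : ∀ (v : EuclideanSpace ℝ (Fin n)) (A : (EuclideanSpace ℝ (Fin n)) →₀ W),
      Tendsto (fun t : ℝ => ιY (t⁻¹ • del (t • v) A)) (𝓝[≠] 0) (𝓝 (P v (ιX A)))) :
    (∀ (v : EuclideanSpace ℝ (Fin n)) (J : X), ‖P v J‖ ≤ ‖v‖ * ‖J‖) ∧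
    (∀ (v w : EuclideanSpace ℝ (Fin n)) (J : X), P (v + w) J = P v J + P w J) ∧
    (∀ (a : ℝ) (v : EuclideanSpace ℝ (Fin n)) (J : X), P (a • v) J = a • P v J) ∧
    (∀ (v : EuclideanSpace ℝ (Fin n)) (p : EuclideanSpace ℝ (Fin n)) (α : W),
      ∀ ε > (0 : ℝ), ∃ N : ℕ, ∀ i ≥ N, ∀ j ≥ N,
        Bnorm 2 (del ((((i : ℝ) + 1)⁻¹) • v) (Finsupp.single p (((i : ℝ) + 1) • α)) -
                 del ((((j : ℝ) + 1)⁻¹) • v) (Finsupp.single p (((j : ℝ) + 1) • α))) < ε) := by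
  obtain ⟨r, rfl⟩ := Nat.exists_eq_add_of_le' hr
  refine ⟨fun v J => ?_, fun v w J => ?_, fun a v J => ?_, fun v p α ε hε => ?_⟩
  · refine hXd.induction_on J (isClosed_le (by fun_prop) (by fun_prop)) fun A => ?_
    rw [hX]
    exact norm_le_of_tendsto_diffQuot hY (hP v A)
  · refine hXd.induction_on J (isClosed_eq (by fun_prop) (by fun_prop)) fun A => ?_
    exact tendsto_nhds_unique (hP (v + w) A) (tendsto_diffQuot_add hY (hP v A) (hP w A))
  · refine hXd.induction_on J (isClosed_eq (by fun_prop) (by fun_prop)) fun A => ?_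
    exact tendsto_nhds_unique (hP (a • v) A) (tendsto_diffQuot_smul a (hP v A))
  · simpa only [diffQuot_single, inv_inv] using
      exists_Bnorm_diffQuot_inv_succ_sub_lt 0 v (Finsupp.single p α) hε
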